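/- Let g ∈ Mon(X). The map f sending the linear factorization (x_L, x_1, …, x_k, x_R) of g to the chain x_L < x_L·x_1 < x_L·x_1·x_2 < ⋯ < x_L·x_1⋯x_k in the interval [1,g] is an order isomorphism from Fact(G,g,I) onto the poset of nonempty chains of [1,g] ordered by inclusion; its inverse sends the chain y_0 < y_1 < ⋯ < y_k to the linear factorization (y_0, y_0⁻¹y_1, …, y_{k−1}⁻¹y_k, y_k⁻¹g). -/

import Mathlib

/-- Minimal length of `g` as a word over `X`. -/
noncomputable def wlen {G : Type*} [Group G] (X : Set G) (g : G) : ℕ :=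
  sInf {n | ∃ l : List G, l.length = n ∧ (∀ x ∈ l, x ∈ X) ∧ l.prod = g}

/-- `h` lies in the interval `[1,g]` for the prefix order determined by `X`. -/
def intLe {G : Type*} [Group G] (X : Set G) (h g : G) : Prop :=
  h ∈ Submonoid.closure X ∧ h⁻¹ * g ∈ Submonoid.closure X ∧
    wlen X h + wlen X (h⁻¹ * g) = wlen X g

/-- A linear factorization `(x_L, x₁, …, x_k, x_R)` of `g`, encoded as a triple
`(x_L, [x₁, …, x_k], x_R)`: all entries in `Mon(X)`, middle entries nontrivial,
the product is `g` and the lengths add up to `ℓ(g)`. -/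
def IsLinFact {G : Type*} [Group G] (X : Set G) (g : G) (p : G × List G × G) : Prop :=
  p.1 ∈ Submonoid.closure X ∧ p.2.2 ∈ Submonoid.closure X ∧
    (∀ a ∈ p.2.1, a ∈ Submonoid.closure X ∧ a ≠ 1) ∧
    p.1 * p.2.1.prod * p.2.2 = g ∧
    wlen X p.1 + (p.2.1.map (wlen X)).sum + wlen X p.2.2 = wlen X g

/-- A single merge of two consecutive entries of a linear factorization. -/
inductive MergeStep {G : Type*} [Group G] : G × List G × G → G × List G × G → Prop
  | left (xL a : G) (l : List G) (xR : G) :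
      MergeStep (xL * a, l, xR) (xL, a :: l, xR)
  | mid (xL : G) (l₁ : List G) (a b : G) (l₂ : List G) (xR : G) :
      MergeStep (xL, l₁ ++ (a * b) :: l₂, xR) (xL, l₁ ++ a :: b :: l₂, xR)
  | right (xL : G) (l : List G) (a xR : G) :
      MergeStep (xL, l, a * xR) (xL, l ++ [a], xR)

/-- The partial order on linear factorizations: `p ≤ q` iff `p` is obtained from `q`
by a (possibly empty) sequence of merges. -/
def FactLE {G : Type*} [Group G] : G × List G × G → G × List G × G → Prop :=
  Relation.ReflTransGen MergeStep

/-- The map `f` sending a linear factorization `(x_L, x₁, …, x_k, x_R)` to the chain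
`{x_L, x_L x₁, x_L x₁ x₂, …, x_L x₁ ⋯ x_k}` of prefix products. -/
noncomputable def chainOf {G : Type*} [Group G] (p : G × List G × G) : Finset G :=
  letI := Classical.decEq G
  ((List.range (p.2.1.length + 1)).map (fun i => p.1 * (p.2.1.take i).prod)).toFinset

/-!
A linear factorization `(x_L, x₁, …, x_k, x_R)` of `g` is determined by `g` and the list of
its partial products `x_L, x_L x₁, …, x_L x₁ ⋯ x_k`, and `(y₀, y₀⁻¹y₁, …, y_k⁻¹g)` rebuilds it
from that list. Merging two adjacent factors deletes one point from the list, and any deletion of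
points is realised by merges, so `FactLE` is the sublist order on these lists. Since the lengths
of the factors add up to `ℓ(g)` and the middle factors are nontrivial, the list climbs strictly
through `[1,g]`; for strictly sorted lists, being a sublist is the same as being a subset, which
identifies `FactLE` with inclusion of chains.
-/

open scoped List

lemma List.foldl_mul_eq_mul_prod {M : Type*} [Monoid M] (a : M) (l : List M) :
    l.foldl (· * ·) a = a * l.prod := by
  induction l generalizing a with
  | nil => simp
  | cons b l ih => simp [ih, mul_assoc]

lemma List.sublist_iff_subset_of_pairwise {α : Type*} {r : α → α → Prop} [Std.Antisymm r]
    [Std.Irrefl r] {l₁ l₂ : List α} (h₁ : l₁.Pairwise r) (h₂ : l₂.Pairwise r) :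
    l₁ <+ l₂ ↔ l₁ ⊆ l₂ :=
  ⟨List.Sublist.subset, fun h =>
    List.sublist_of_subperm_of_pairwise (List.subperm_of_subset h₁.nodup h) h₁ h₂⟩

section

variable {G : Type*} [Group G] {X : Set G}

lemma wlen_le_length {a : G} {l : List G} (hl : ∀ x ∈ l, x ∈ X) (hprod : l.prod = a) :
    wlen X a ≤ l.length :=
  Nat.sInf_le ⟨l, rfl, hl, hprod⟩

lemma exists_length_eq_wlen {a : G} (ha : a ∈ Submonoid.closure X) :
    ∃ l : List G, l.length = wlen X a ∧ (∀ x ∈ l, x ∈ X) ∧ l.prod = a := by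
  obtain ⟨l, hl, hprod⟩ := Submonoid.exists_list_of_mem_closure ha
  exact Nat.sInf_mem
    (s := {n | ∃ l : List G, l.length = n ∧ (∀ x ∈ l, x ∈ X) ∧ l.prod = a})
    ⟨l.length, l, rfl, hl, hprod⟩

@[simp]
lemma wlen_one : wlen X (1 : G) = 0 :=
  Nat.le_zero.mp (wlen_le_length (l := []) (by simp) rfl)

lemma wlen_mul_le {a b : G} (ha : a ∈ Submonoid.closure X) (hb : b ∈ Submonoid.closure X) :
    wlen X (a * b) ≤ wlen X a + wlen X b := by
  obtain ⟨l, hl, hlX, rfl⟩ := exists_length_eq_wlen ha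
  obtain ⟨m, hm, hmX, rfl⟩ := exists_length_eq_wlen hb
  rw [← hl, ← hm, ← List.length_append, ← List.prod_append]
  exact wlen_le_length (fun x hx => (List.mem_append.mp hx).elim (hlX x) (hmX x)) rfl

lemma eq_one_of_wlen_eq_zero {a : G} (ha : a ∈ Submonoid.closure X) (h : wlen X a = 0) :
    a = 1 := by
  obtain ⟨l, hl, -, rfl⟩ := exists_length_eq_wlen ha
  rw [h, List.length_eq_zero_iff] at hl
  simp [hl]

lemma wlen_list_prod_le {L : List G} (hL : ∀ a ∈ L, a ∈ Submonoid.closure X) :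
    wlen X L.prod ≤ (L.map (wlen X)).sum := by
  induction L with
  | nil => simp
  | cons a L ih =>
    simp only [List.forall_mem_cons] at hL
    calc wlen X (a :: L).prod ≤ wlen X a + wlen X L.prod :=
          wlen_mul_le hL.1 (Submonoid.list_prod_mem _ hL.2)
      _ ≤ ((a :: L).map (wlen X)).sum := by simpa using ih hL.2

lemma intLe_antisymm {a b : G} (hab : intLe X a b) (hba : intLe X b a) : a = b := by
  obtain ⟨-, hmem, hlen⟩ := hab
  have hlen' := hba.2.2
  exact inv_mul_eq_one.mp (eq_one_of_wlen_eq_zero hmem (by omega))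

lemma wlen_lt_of_intLe_of_ne {a b : G} (hab : intLe X a b) (hne : a ≠ b) :
    wlen X a < wlen X b := by
  obtain ⟨-, hmem, hlen⟩ := hab
  have : wlen X (a⁻¹ * b) ≠ 0 := fun h =>
    hne (inv_mul_eq_one.mp (eq_one_of_wlen_eq_zero hmem h))
  omega

def intLt (X : Set G) (a b : G) : Prop :=
  intLe X a b ∧ a ≠ b

instance : Std.Irrefl (intLt X) := ⟨fun _ h => h.2 rfl⟩

instance : Std.Antisymm (intLt X) := ⟨fun _ _ hab hba => intLe_antisymm hab.1 hba.1⟩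

lemma pairwise_intLe_or_intLe {l : List G} (hl : l.Pairwise (intLt X)) :
    {a | a ∈ l}.Pairwise fun a b => intLe X a b ∨ intLe X b a := by
  have : Std.Symm fun a b : G => intLe X a b ∨ intLe X b a := ⟨fun _ _ => Or.symm⟩
  exact fun a ha b hb hne => List.Pairwise.forall (R := fun a b => intLe X a b ∨ intLe X b a)
    (hl.imp fun h => Or.inl h.1) ha hb hne

lemma exists_list_pairwise_intLt (c : Finset G)
    (hc : (c : Set G).Pairwise fun a b => intLe X a b ∨ intLe X b a) :
    ∃ l : List G, l.Pairwise (intLt X) ∧ ∀ a, a ∈ l ↔ a ∈ c := by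
  set l := c.toList.mergeSort fun a b => decide (wlen X a ≤ wlen X b)
  have hperm : l.Perm c.toList := List.mergeSort_perm _ _
  have hmem : ∀ a, a ∈ l ↔ a ∈ c := fun a => hperm.mem_iff.trans Finset.mem_toList
  have hsorted : l.Pairwise fun a b => wlen X a ≤ wlen X b := by
    simpa using List.pairwise_mergeSort (le := fun a b => decide (wlen X a ≤ wlen X b))
      (by simpa using fun _ _ _ => le_trans) (by simpa using fun _ _ => le_total _ _) c.toList
  refine ⟨l, (hsorted.and (hperm.nodup_iff.mpr c.nodup_toList)).imp_of_mem ?_, hmem⟩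
  rintro a b ha hb ⟨hle, hne⟩
  refine ⟨(hc ((hmem a).mp ha) ((hmem b).mp hb) hne).resolve_right fun hba => ?_, hne⟩
  exact (wlen_lt_of_intLe_of_ne hba hne.symm).not_ge hle

def IsGeodesic (X : Set G) (L : List G) : Prop :=
  (∀ a ∈ L, a ∈ Submonoid.closure X) ∧ wlen X L.prod = (L.map (wlen X)).sum

namespace IsGeodesic

variable {A B L : List G}

lemma of_append (h : IsGeodesic X (A ++ B)) : IsGeodesic X A ∧ IsGeodesic X B := by
  obtain ⟨hmem, hlen⟩ := h
  simp only [List.mem_append, or_imp, forall_and] at hmem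
  have hA := wlen_list_prod_le hmem.1
  have hB := wlen_list_prod_le hmem.2
  have hAB := wlen_mul_le (Submonoid.list_prod_mem _ hmem.1) (Submonoid.list_prod_mem _ hmem.2)
  simp only [List.prod_append, List.map_append, List.sum_append] at hlen
  exact ⟨⟨hmem.1, by omega⟩, ⟨hmem.2, by omega⟩⟩

lemma intLe_prod_append (h : IsGeodesic X (A ++ B)) : intLe X A.prod (A ++ B).prod := by
  obtain ⟨⟨hA, hlenA⟩, ⟨hB, hlenB⟩⟩ := h.of_append
  refine ⟨Submonoid.list_prod_mem _ hA, by simpa using Submonoid.list_prod_mem _ hB, ?_⟩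
  have hlen := h.2
  simp only [List.prod_append, List.map_append, List.sum_append] at hlen
  simp [hlenA, hlenB, hlen]

lemma intLe_take_prod (h : IsGeodesic X L) {i j : ℕ} (hij : i ≤ j) :
    intLe X (L.take i).prod (L.take j).prod := by
  have hj : IsGeodesic X (L.take j) := by
    rw [← List.take_append_drop j L] at h
    exact h.of_append.1
  rw [← List.take_append_drop i (L.take j), List.take_take, min_eq_left hij] at hj ⊢
  exact hj.intLe_prod_append

lemma eq_one_of_prod_eq_one (h : IsGeodesic X L) (h1 : L.prod = 1) {a : G} (ha : a ∈ L) :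
    a = 1 := by
  have hsum : (L.map (wlen X)).sum = 0 := by rw [← h.2, h1, wlen_one]
  rw [List.sum_eq_zero_iff] at hsum
  exact eq_one_of_wlen_eq_zero (h.1 a ha) (hsum _ (List.mem_map_of_mem ha))

lemma take_prod_ne (h : IsGeodesic X L) {i j : ℕ} (hij : i < j) (hj : j ≤ L.length)
    (hi : L[i] ≠ 1) : (L.take i).prod ≠ (L.take j).prod := by
  intro heq
  have hsplit : L.take j = L.take i ++ (L.take j).drop i := by
    conv_lhs => rw [← List.take_append_drop i (L.take j)]
    rw [List.take_take, min_eq_left hij.le]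
  have hseg : IsGeodesic X ((L.take j).drop i) := by
    rw [← List.take_append_drop j L, hsplit] at h
    exact h.of_append.1.of_append.2
  refine hi (hseg.eq_one_of_prod_eq_one ?_ ?_)
  · rwa [hsplit, List.prod_append, left_eq_mul] at heq
  · rw [List.drop_eq_getElem_cons (by simp; omega)]
    simp

end IsGeodesic

def chainList (p : G × List G × G) : List G :=
  p.2.1.scanl (· * ·) p.1

lemma chainList_eq_cons (p : G × List G × G) : chainList p = p.1 :: (chainList p).tail := by
  obtain ⟨x, l, r⟩ := p
  cases l <;> simp [chainList, List.scanl_cons]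

lemma length_chainList (p : G × List G × G) : (chainList p).length = p.2.1.length + 1 :=
  List.length_scanl

lemma getElem_chainList {p : G × List G × G} {i : ℕ} (hi : i < (chainList p).length) :
    (chainList p)[i] = p.1 * (p.2.1.take i).prod := by
  simp only [chainList, List.getElem_scanl, List.foldl_mul_eq_mul_prod]

lemma mem_chainOf {p : G × List G × G} {a : G} : a ∈ chainOf p ↔ a ∈ chainList p := by
  simp only [chainOf, List.mem_toFinset, List.mem_map, List.mem_range]
  simp only [List.mem_iff_getElem, getElem_chainList, length_chainList]
  exact ⟨fun ⟨i, hi, h⟩ => ⟨i, hi, h⟩, fun ⟨i, hi, h⟩ => ⟨i, hi, h⟩⟩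

lemma coe_chainOf (p : G × List G × G) : (chainOf p : Set G) = {a | a ∈ chainList p} :=
  Set.ext fun _ => mem_chainOf

def prependPoint (a : G) (p : G × List G × G) : G × List G × G :=
  (a, a⁻¹ * p.1 :: p.2.1, p.2.2)

/-- `ofChain g y₀ [y₁, …, y_k] = (y₀, y₀⁻¹y₁, …, y_{k-1}⁻¹y_k, y_k⁻¹g)`. -/
def ofChain (g : G) : G → List G → G × List G × G
  | a, [] => (a, [], a⁻¹ * g)
  | a, b :: l => prependPoint a (ofChain g b l)

@[simp]
lemma ofChain_fst (g a : G) (l : List G) : (ofChain g a l).1 = a := by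
  cases l <;> rfl

lemma ofChain_ofFn (g : G) {k : ℕ} (y : Fin (k + 1) → G) :
    ofChain g (y 0) (List.ofFn fun i : Fin k => y i.succ) =
      (y 0, List.ofFn (fun i : Fin k => (y i.castSucc)⁻¹ * y i.succ),
        (y (Fin.last k))⁻¹ * g) := by
  induction k with
  | zero => rfl
  | succ k ih =>
    rw [List.ofFn_succ, ofChain, ih (fun i => y i.succ)]
    simp only [prependPoint, List.ofFn_succ (n := k), Fin.succ_last, Fin.succ_castSucc,
      Fin.castSucc_zero]

lemma chainList_prependPoint (a : G) (p : G × List G × G) :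
    chainList (prependPoint a p) = a :: chainList p := by
  simp [chainList, prependPoint, List.scanl_cons]

lemma chainList_ofChain (g a : G) (l : List G) : chainList (ofChain g a l) = a :: l := by
  induction l generalizing a with
  | nil => rfl
  | cons b l ih => rw [ofChain, chainList_prependPoint, ih]

lemma eq_ofChain_of_chainList_eq {g a : G} {l : List G} {p : G × List G × G}
    (hprod : p.1 * p.2.1.prod * p.2.2 = g) (hp : chainList p = a :: l) : p = ofChain g a l := by
  obtain ⟨x, m, r⟩ := p
  induction m generalizing x a l with
  | nil =>
    obtain ⟨rfl, rfl⟩ : x = a ∧ [] = l := by simpa [chainList] using hp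
    simp only [List.prod_nil, mul_one] at hprod
    simp [ofChain, ← hprod]
  | cons c m ih =>
    obtain ⟨rfl, hl⟩ : x = a ∧ chainList (x * c, m, r) = l := by
      simpa [chainList, List.scanl_cons] using hp
    rw [← hl, chainList_eq_cons, ofChain,
      ← ih (x := x * c) (a := x * c) (by simpa [mul_assoc] using hprod) (chainList_eq_cons _)]
    simp [prependPoint]

lemma MergeStep.chainList_sublist {p q : G × List G × G} (h : MergeStep p q) :
    chainList p <+ chainList q := by
  cases h with
  | left xL a l xR => simp [chainList, List.scanl_cons]
  | mid xL l₁ a b l₂ xR =>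
    simp only [chainList, List.scanl_append, List.scanl_cons, List.tail_cons, mul_assoc]
    exact (List.sublist_cons_self _ _).append_left _
  | right xL l a xR => simp [chainList, List.scanl_append]

lemma FactLE.chainList_sublist {p q : G × List G × G} (h : FactLE p q) :
    chainList p <+ chainList q := by
  induction h with
  | refl => exact List.Sublist.refl _
  | tail _ hstep ih => exact ih.trans hstep.chainList_sublist

lemma mergeStep_prependPoint (a : G) (p : G × List G × G) : MergeStep p (prependPoint a p) := by
  simpa [prependPoint] using MergeStep.left a (a⁻¹ * p.1) p.2.1 p.2.2

lemma MergeStep.prependPoint {p q : G × List G × G} (a : G) (h : MergeStep p q) :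
    MergeStep (prependPoint a p) (prependPoint a q) := by
  cases h with
  | left xL c l xR =>
    simpa [_root_.prependPoint, mul_assoc] using MergeStep.mid a [] (a⁻¹ * xL) c l xR
  | mid xL l₁ b c l₂ xR => exact MergeStep.mid a (a⁻¹ * xL :: l₁) b c l₂ xR
  | right xL l c xR => exact MergeStep.right a (a⁻¹ * xL :: l) c xR

lemma FactLE.prependPoint {p q : G × List G × G} (a : G) (h : FactLE p q) :
    FactLE (prependPoint a p) (prependPoint a q) :=
  Relation.ReflTransGen.lift (_root_.prependPoint a) (fun _ _ => MergeStep.prependPoint a) p q h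

lemma factLE_ofChain_nil (g a : G) (l : List G) : FactLE (ofChain g a []) (ofChain g a l) := by
  induction l generalizing a with
  | nil => exact Relation.ReflTransGen.refl
  | cons b l ih =>
    refine Relation.ReflTransGen.head ?_ (FactLE.prependPoint a (ih b))
    simpa [ofChain, _root_.prependPoint, mul_assoc] using
      MergeStep.right a [] (a⁻¹ * b) (b⁻¹ * g)

lemma factLE_ofChain_of_sublist (g : G) {a b : G} {l m : List G} (h : a :: l <+ b :: m) :
    FactLE (ofChain g a l) (ofChain g b m) := by
  induction m generalizing a b l with
  | nil =>
    obtain ⟨rfl, rfl⟩ : a = b ∧ l = [] := by simpa using h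
    exact Relation.ReflTransGen.refl
  | cons c m ih =>
    cases h with
    | cons _ h => exact (ih h).tail (mergeStep_prependPoint b _)
    | cons_cons _ h =>
      cases l with
      | nil => exact factLE_ofChain_nil g a _
      | cons d l => exact FactLE.prependPoint a (ih h)

namespace IsLinFact

variable {g x r : G} {l : List G} {p q : G × List G × G}

lemma prod_eq (h : IsLinFact X g (x, l, r)) : (x :: l ++ [r]).prod = g := by
  simpa [mul_assoc] using h.2.2.2.1

lemma isGeodesic (h : IsLinFact X g (x, l, r)) : IsGeodesic X (x :: l ++ [r]) := by
  have hprod := prod_eq h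
  obtain ⟨hx, hr, hl, -, hlen⟩ := h
  refine ⟨?_, ?_⟩
  · simp only [List.cons_append, List.forall_mem_cons, List.forall_mem_append]
    exact ⟨hx, fun a ha => (hl a ha).1, hr, by simp⟩
  · rw [hprod, ← hlen]
    simp [add_assoc]

lemma getElem_chainList_eq_take_prod {i : ℕ} (hi : i < (chainList (x, l, r)).length) :
    (chainList (x, l, r))[i] = ((x :: l ++ [r]).take (i + 1)).prod := by
  rw [length_chainList] at hi
  simp [getElem_chainList, List.take_append_of_le_length (show i ≤ l.length by simpa using hi)]

lemma pairwise_chainList (h : IsLinFact X g p) : (chainList p).Pairwise (intLt X) := by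
  obtain ⟨x, l, r⟩ := p
  rw [List.pairwise_iff_getElem]
  intro i j hi hj hij
  rw [getElem_chainList_eq_take_prod, getElem_chainList_eq_take_prod]
  rw [length_chainList] at hi hj
  dsimp only at hi hj
  refine ⟨(isGeodesic h).intLe_take_prod (by omega),
    (isGeodesic h).take_prod_ne (by omega) (by simp; omega) ?_⟩
  simpa [List.getElem_append_left (show i < l.length by omega)] using
    (h.2.2.1 _ (List.getElem_mem _)).2

lemma intLe_of_mem_chainList (h : IsLinFact X g p) {a : G} (ha : a ∈ chainList p) :
    intLe X a g := by
  obtain ⟨x, l, r⟩ := p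
  obtain ⟨i, hi, rfl⟩ := List.mem_iff_getElem.mp ha
  rw [getElem_chainList_eq_take_prod, ← prod_eq h]
  rw [length_chainList] at hi
  dsimp only at hi
  simpa using (isGeodesic h).intLe_take_prod (show i + 1 ≤ l.length + 2 by omega)

lemma eq_ofChain (h : IsLinFact X g p) : p = ofChain g p.1 (chainList p).tail :=
  eq_ofChain_of_chainList_eq h.2.2.2.1 (chainList_eq_cons p)

lemma factLE_iff_chainOf_subset (hp : IsLinFact X g p) (hq : IsLinFact X g q) :
    FactLE p q ↔ (chainOf p : Set G) ⊆ chainOf q := by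
  trans chainList p <+ chainList q
  · refine ⟨FactLE.chainList_sublist, fun h => ?_⟩
    rw [chainList_eq_cons p, chainList_eq_cons q] at h
    rw [eq_ofChain hp, eq_ofChain hq]
    exact factLE_ofChain_of_sublist g h
  · rw [List.sublist_iff_subset_of_pairwise (pairwise_chainList hp) (pairwise_chainList hq),
      coe_chainOf, coe_chainOf]
    exact ⟨fun h _ ha => h ha, fun h _ ha => h ha⟩

lemma eq_of_chainOf_eq (hp : IsLinFact X g p) (hq : IsLinFact X g q)
    (h : chainOf p = chainOf q) : p = q := by
  have hchain : chainList p = chainList q :=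
    (pairwise_chainList hp).eq_of_mem_iff (pairwise_chainList hq)
      fun a => by rw [← mem_chainOf, ← mem_chainOf, h]
  rw [eq_ofChain_of_chainList_eq hp.2.2.2.1 (chainList_eq_cons p),
    eq_ofChain_of_chainList_eq hq.2.2.2.1 (hchain.symm.trans (chainList_eq_cons p))]

end IsLinFact

lemma isLinFact_prependPoint {g a : G} {p : G × List G × G} (hp : IsLinFact X g p)
    (ha : intLt X a p.1) : IsLinFact X g (prependPoint a p) := by
  obtain ⟨x, l, r⟩ := p
  obtain ⟨-, hr, hl, hprod, hlen⟩ := hp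
  obtain ⟨⟨ha, hax, hlena⟩, hne⟩ := ha
  dsimp only at *
  refine ⟨ha, hr, ?_, ?_, ?_⟩
  · simp only [prependPoint, List.mem_cons, forall_eq_or_imp]
    exact ⟨⟨hax, fun h => hne (inv_mul_eq_one.mp h)⟩, hl⟩
  · simp [prependPoint, ← hprod, mul_assoc]
  · simp only [prependPoint, List.map_cons, List.sum_cons]
    omega

lemma isLinFact_ofChain {g a : G} {l : List G} (hchain : (a :: l).Pairwise (intLt X))
    (hg : ∀ y ∈ a :: l, intLe X y g) : IsLinFact X g (ofChain g a l) := by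
  induction l generalizing a with
  | nil =>
    obtain ⟨ha, hag, hlen⟩ := hg a List.mem_cons_self
    exact ⟨ha, hag, by simp [ofChain], by simp [ofChain], by simpa [ofChain] using hlen⟩
  | cons b l ih =>
    rw [List.pairwise_cons] at hchain
    refine isLinFact_prependPoint (ih hchain.2 fun y hy => hg y (List.mem_cons_of_mem a hy)) ?_
    rw [ofChain_fst]
    exact hchain.1 b List.mem_cons_self

lemma exists_isLinFact_chainOf_eq {g : G} (c : Finset G) (hne : c.Nonempty)
    (hcg : ∀ h ∈ c, intLe X h g)
    (hc : (c : Set G).Pairwise fun a b => intLe X a b ∨ intLe X b a) :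
    ∃ p, IsLinFact X g p ∧ chainOf p = c := by
  obtain ⟨_ | ⟨a, l⟩, hl, hmem⟩ := exists_list_pairwise_intLt c hc
  · obtain ⟨a, ha⟩ := hne
    exact absurd ((hmem a).mpr ha) List.not_mem_nil
  · refine ⟨ofChain g a l, isLinFact_ofChain hl fun y hy => hcg y ((hmem y).mp hy),
      Finset.ext fun y => ?_⟩
    rw [mem_chainOf, chainList_ofChain, hmem]

end

theorem stmt1_general {G : Type*} [Group G] (X : Set G)
    (g : G) :
    -- `f` lands in nonempty chains of `[1,g]`
    (∀ p, IsLinFact X g p → (chainOf p).Nonempty ∧ (∀ h ∈ chainOf p, intLe X h g) ∧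
      (chainOf p : Set G).Pairwise (fun a b => intLe X a b ∨ intLe X b a)) ∧
    -- `f` is order-preserving and order-reflecting
    (∀ p q, IsLinFact X g p → IsLinFact X g q →
      (FactLE p q ↔ (chainOf p : Set G) ⊆ (chainOf q : Set G))) ∧
    -- `f` is injective
    (∀ p q, IsLinFact X g p → IsLinFact X g q → chainOf p = chainOf q → p = q) ∧
    -- `f` is surjective onto nonempty chains of `[1,g]`
    (∀ c : Finset G, c.Nonempty → (∀ h ∈ c, intLe X h g) →
      (c : Set G).Pairwise (fun a b => intLe X a b ∨ intLe X b a) →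
      ∃ p, IsLinFact X g p ∧ chainOf p = c) ∧
    -- the inverse formula: the chain `y₀ < y₁ < ⋯ < y_k` in `[1,g]` comes from the
    -- linear factorization `(y₀, y₀⁻¹y₁, …, y_{k-1}⁻¹y_k, y_k⁻¹g)`
    (∀ (k : ℕ) (y : Fin (k + 1) → G),
      (∀ i j : Fin (k + 1), i < j → intLe X (y i) (y j) ∧ y i ≠ y j) →
      (∀ i, intLe X (y i) g) →
      IsLinFact X g
        (y 0, List.ofFn (fun i : Fin k => (y i.castSucc)⁻¹ * y i.succ), (y (Fin.last k))⁻¹ * g) ∧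
      (chainOf (y 0, List.ofFn (fun i : Fin k => (y i.castSucc)⁻¹ * y i.succ),
        (y (Fin.last k))⁻¹ * g) : Set G) = Set.range y) := by
  refine ⟨fun p hp => ⟨⟨p.1, mem_chainOf.mpr ?_⟩, fun a ha => ?_, ?_⟩,
    fun p q => IsLinFact.factLE_iff_chainOf_subset, fun p q => IsLinFact.eq_of_chainOf_eq,
    fun c => exists_isLinFact_chainOf_eq c, fun k y hy hyg => ?_⟩
  · rw [chainList_eq_cons]
    exact List.mem_cons_self
  · exact IsLinFact.intLe_of_mem_chainList hp (mem_chainOf.mp ha)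
  · rw [coe_chainOf]
    exact pairwise_intLe_or_intLe (IsLinFact.pairwise_chainList hp)
  have hchain : y 0 :: List.ofFn (fun i : Fin k => y i.succ) = List.ofFn y :=
    List.ofFn_succ.symm
  rw [← ofChain_ofFn]
  refine ⟨isLinFact_ofChain ?_ ?_, ?_⟩
  · rw [hchain, List.pairwise_ofFn]
    exact hy
  · rw [hchain]
    intro z hz
    obtain ⟨i, rfl⟩ := List.mem_ofFn.mp hz
    exact hyg i
  · rw [coe_chainOf, chainList_ofChain, hchain]
    exact Set.ext fun _ => List.mem_ofFn

/-- `f = chainOf` is an order isomorphism from `Fact(G,g,I)` onto the poset of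
nonempty chains of `[1,g]` ordered by inclusion; its inverse sends the chain
`y₀ < y₁ < ⋯ < y_k` to the linear factorization `(y₀, y₀⁻¹y₁, …, y_{k-1}⁻¹y_k, y_k⁻¹g)`. -/
theorem stmt1 {G : Type*} [Group G] (X : Set G)
    (hX : ∀ g x, x ∈ X → g * x * g⁻¹ ∈ X)
    (g : G) (hg : g ∈ Submonoid.closure X) :
    -- `f` lands in nonempty chains of `[1,g]`
    (∀ p, IsLinFact X g p → (chainOf p).Nonempty ∧ (∀ h ∈ chainOf p, intLe X h g) ∧
      (chainOf p : Set G).Pairwise (fun a b => intLe X a b ∨ intLe X b a)) ∧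
    -- `f` is order-preserving and order-reflecting
    (∀ p q, IsLinFact X g p → IsLinFact X g q →
      (FactLE p q ↔ (chainOf p : Set G) ⊆ (chainOf q : Set G))) ∧
    -- `f` is injective
    (∀ p q, IsLinFact X g p → IsLinFact X g q → chainOf p = chainOf q → p = q) ∧
    -- `f` is surjective onto nonempty chains of `[1,g]`
    (∀ c : Finset G, c.Nonempty → (∀ h ∈ c, intLe X h g) →
      (c : Set G).Pairwise (fun a b => intLe X a b ∨ intLe X b a) →
      ∃ p, IsLinFact X g p ∧ chainOf p = c) ∧
    -- the inverse formula: the chain `y₀ < y₁ < ⋯ < y_k` in `[1,g]` comes from the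
    -- linear factorization `(y₀, y₀⁻¹y₁, …, y_{k-1}⁻¹y_k, y_k⁻¹g)`
    (∀ (k : ℕ) (y : Fin (k + 1) → G),
      (∀ i j : Fin (k + 1), i < j → intLe X (y i) (y j) ∧ y i ≠ y j) →
      (∀ i, intLe X (y i) g) →
      IsLinFact X g
        (y 0, List.ofFn (fun i : Fin k => (y i.castSucc)⁻¹ * y i.succ), (y (Fin.last k))⁻¹ * g) ∧
      (chainOf (y 0, List.ofFn (fun i : Fin k => (y i.castSucc)⁻¹ * y i.succ),
        (y (Fin.last k))⁻¹ * g) : Set G) = Set.range y) :=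
  stmt1_general X g
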